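/- arXiv:1811.01652 — 3 statements merged into one kernel-verified Lean document; each statement's English description precedes it below -/
import Mathlib

section
/- Let X be a nontrivial real Banach space and let n ≥ 2 be an integer. Then C̄_NJ^{(n)}(X) ≤ C̄_NJ^{(n+1)}(X) and C̲_NJ^{(n+1)}(X) ≤ C̲_NJ^{(n)}(X). -/
open Finset MeasureTheory

noncomputable def njRatio {X : Type*} [NormedAddCommGroup X] [NormedSpace ℝ X]
    {m : ℕ} (x0 : X) (y : Fin m → X) : ℝ :=
  (∑ ε : Fin m → Bool, ‖x0 + ∑ j, (if ε j then (1 : ℝ) else -1) • y j‖ ^ 2) /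
    (2 ^ m * (‖x0‖ ^ 2 + ∑ j, ‖y j‖ ^ 2))

noncomputable def upperNJ (X : Type*) [NormedAddCommGroup X] [NormedSpace ℝ X] (n : ℕ) : ℝ :=
  sSup {c : ℝ | ∃ (x0 : X) (y : Fin (n - 1) → X),
    0 < ‖x0‖ ^ 2 + ∑ j, ‖y j‖ ^ 2 ∧ c = njRatio x0 y}

noncomputable def lowerNJ (X : Type*) [NormedAddCommGroup X] [NormedSpace ℝ X] (n : ℕ) : ℝ :=
  sInf {c : ℝ | ∃ (x0 : X) (y : Fin (n - 1) → X),
    0 < ‖x0‖ ^ 2 + ∑ j, ‖y j‖ ^ 2 ∧ c = njRatio x0 y}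

noncomputable def upperMNJ (X : Type*) [NormedAddCommGroup X] [NormedSpace ℝ X] (n : ℕ) : ℝ :=
  sSup {c : ℝ | ∃ (x0 : X) (y : Fin (n - 1) → X),
    ‖x0‖ = 1 ∧ (∀ j, ‖y j‖ = 1) ∧ c = njRatio x0 y}

noncomputable def lowerMNJ (X : Type*) [NormedAddCommGroup X] [NormedSpace ℝ X] (n : ℕ) : ℝ :=
  sInf {c : ℝ | ∃ (x0 : X) (y : Fin (n - 1) → X),
    ‖x0‖ = 1 ∧ (∀ j, ‖y j‖ = 1) ∧ c = njRatio x0 y}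

/-! Padding `(x₁, …, xₙ)` with a zero vector `xₙ₊₁ = 0` leaves the sum of squared norms
unchanged and makes each term of the numerator appear twice, once for each sign of `xₙ₊₁`, which
exactly cancels the extra factor 2 in `2ⁿ`. Hence every value of `C⁽ⁿ⁾` is a value of `C⁽ⁿ⁺¹⁾`.
These value sets are nonempty because `X ≠ 0`, and bounded (`0 ≤ C⁽ⁿ⁾ ≤ n` by Cauchy–Schwarz),
so their suprema increase and their infima decrease. -/

lemma norm_sum_sq_le_card_mul {E ι : Type*} [SeminormedAddCommGroup E] (s : Finset ι) (v : ι → E) :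
    ‖∑ i ∈ s, v i‖ ^ 2 ≤ #s * ∑ i ∈ s, ‖v i‖ ^ 2 :=
  (pow_le_pow_left₀ (norm_nonneg _) (norm_sum_le _ _) 2).trans sq_sum_le_card_mul_sum_sq

section NJRatio

variable {X : Type*} [NormedAddCommGroup X] [NormedSpace ℝ X]

lemma norm_add_signed_sum_sq_le {m : ℕ} (x0 : X) (y : Fin m → X) (ε : Fin m → Bool) :
    ‖x0 + ∑ j, (if ε j then (1 : ℝ) else -1) • y j‖ ^ 2 ≤
      (m + 1) * (‖x0‖ ^ 2 + ∑ j, ‖y j‖ ^ 2) := by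
  simpa [Fin.sum_univ_succ, norm_smul, apply_ite] using
    norm_sum_sq_le_card_mul univ
      (Fin.cons x0 fun j ↦ (if ε j then (1 : ℝ) else -1) • y j : Fin (m + 1) → X)

lemma njRatio_nonneg {m : ℕ} (x0 : X) (y : Fin m → X) : 0 ≤ njRatio x0 y := by
  unfold njRatio
  positivity

lemma njRatio_le {m : ℕ} (x0 : X) (y : Fin m → X) : njRatio x0 y ≤ m + 1 := by
  refine div_le_of_le_mul₀ (by positivity) (by positivity) ?_
  calc ∑ ε : Fin m → Bool, ‖x0 + ∑ j, (if ε j then (1 : ℝ) else -1) • y j‖ ^ 2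
      ≤ ∑ _ε : Fin m → Bool, (m + 1) * (‖x0‖ ^ 2 + ∑ j, ‖y j‖ ^ 2) :=
        sum_le_sum fun ε _ ↦ norm_add_signed_sum_sq_le x0 y ε
    _ = (m + 1) * (2 ^ m * (‖x0‖ ^ 2 + ∑ j, ‖y j‖ ^ 2)) := by
        simp only [sum_const, card_univ, Fintype.card_pi, Fintype.card_bool, prod_const,
          Fintype.card_fin, nsmul_eq_mul, Nat.cast_pow, Nat.cast_ofNat]
        ring

lemma njRatio_cons_zero {m : ℕ} (x0 : X) (y : Fin m → X) :
    njRatio x0 (Fin.cons (0 : X) y) = njRatio x0 y := by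
  have hnum : ∑ ε : Fin (m + 1) → Bool,
      ‖x0 + ∑ j, (if ε j then (1 : ℝ) else -1) • (Fin.cons (0 : X) y : Fin (m + 1) → X) j‖ ^ 2 =
      2 * ∑ ε : Fin m → Bool, ‖x0 + ∑ j, (if ε j then (1 : ℝ) else -1) • y j‖ ^ 2 := by
    rw [← (Fin.consEquiv fun _ ↦ Bool).sum_comp, Fintype.sum_prod_type]
    simp [Fin.consEquiv, Fin.sum_univ_succ, two_mul]
  unfold njRatio
  rw [hnum, Fin.sum_univ_succ]
  simp only [Fin.cons_zero, Fin.cons_succ, norm_zero]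
  rw [pow_succ]
  field_simp
  ring

-- The values of `C⁽ᵐ⁺¹⁾`: `x0` plays the role of `x₁` and `y` of `x₂, …, xₘ₊₁`.
variable (X) in
def njRatioSet (m : ℕ) : Set ℝ :=
  {c | ∃ (x0 : X) (y : Fin m → X), 0 < ‖x0‖ ^ 2 + ∑ j, ‖y j‖ ^ 2 ∧ c = njRatio x0 y}

lemma njRatioSet_subset_succ (m : ℕ) : njRatioSet X m ⊆ njRatioSet X (m + 1) := by
  rintro c ⟨x0, y, hpos, rfl⟩
  refine ⟨x0, Fin.cons 0 y, ?_, (njRatio_cons_zero x0 y).symm⟩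
  simpa [Fin.sum_univ_succ] using hpos

variable (X) in
lemma njRatioSet_mono : Monotone (njRatioSet X) :=
  monotone_nat_of_le_succ njRatioSet_subset_succ

variable (X) in
lemma njRatioSet_nonempty [Nontrivial X] (m : ℕ) : (njRatioSet X m).Nonempty := by
  obtain ⟨x0, hx0⟩ := exists_ne (0 : X)
  exact ⟨_, x0, 0, by simpa using pow_pos (norm_pos_iff.2 hx0) 2, rfl⟩

variable (X) in
lemma njRatioSet_bddAbove (m : ℕ) : BddAbove (njRatioSet X m) := by
  refine ⟨m + 1, ?_⟩
  rintro c ⟨x0, y, -, rfl⟩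
  exact njRatio_le x0 y

variable (X) in
lemma njRatioSet_bddBelow (m : ℕ) : BddBelow (njRatioSet X m) := by
  refine ⟨0, ?_⟩
  rintro c ⟨x0, y, -, rfl⟩
  exact njRatio_nonneg x0 y

end NJRatio

theorem stmt_1_general (X : Type*) [NormedAddCommGroup X] [NormedSpace ℝ X]
    [Nontrivial X] (n : ℕ) :
    upperNJ X n ≤ upperNJ X (n + 1) ∧ lowerNJ X (n + 1) ≤ lowerNJ X n := by
  have hmono : njRatioSet X (n - 1) ⊆ njRatioSet X n := njRatioSet_mono X (Nat.sub_le n 1)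
  exact ⟨csSup_le_csSup (njRatioSet_bddAbove X n) (njRatioSet_nonempty X _) hmono,
    csInf_le_csInf (njRatioSet_bddBelow X n) (njRatioSet_nonempty X _) hmono⟩

theorem stmt_1 (X : Type*) [NormedAddCommGroup X] [NormedSpace ℝ X] [CompleteSpace X]
    [Nontrivial X] (n : ℕ) (hn : 2 ≤ n) :
    upperNJ X n ≤ upperNJ X (n + 1) ∧ lowerNJ X (n + 1) ≤ lowerNJ X n :=
  stmt_1_general X n
end

section
/- Let X be a nontrivial real Banach space with topological dual X* equipped with the operator norm, and let n ≥ 2 be an integer. Then C̲_NJ^{(n)}(X*) ≥ 1 / C̄_NJ^{(n)}(X). -/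
open Finset MeasureTheory

/-! Pair each sign pattern of functionals `f_ε = f₀ + ∑ ±gⱼ` with the same sign pattern of vectors
`x_ε = x₀ + ∑ ±yⱼ`. Averaging over the signs kills the cross terms, so
`∑_ε f_ε x_ε = 2^(n-1) (f₀ x₀ + ∑ gⱼ yⱼ)`. Choosing `x₀, yⱼ` that almost norm `f₀, gⱼ`, with
`‖x₀‖ ≤ ‖f₀‖` and `‖yⱼ‖ ≤ ‖gⱼ‖`, the right-hand side is nearly `2^(n-1) D` with
`D = ‖f₀‖² + ∑ ‖gⱼ‖²`, while Cauchy–Schwarz and the definition of `C = upperNJ X n` bound the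
left-hand side by `(∑_ε ‖f_ε‖²)^(1/2) (2^(n-1) C D)^(1/2)`. Squaring gives
`2^(n-1) D ≤ C ∑_ε ‖f_ε‖²`, that is, every ratio in `lowerNJ (StrongDual ℝ X) n` is at least `1 / C`.
-/

namespace NeumannJordan

def boolSign (b : Bool) : ℝ := if b then 1 else -1

@[simp] lemma boolSign_not (b : Bool) : boolSign (!b) = -boolSign b := by
  cases b <;> simp [boolSign]

@[simp] lemma boolSign_mul_self (b : Bool) : boolSign b * boolSign b = 1 := by
  cases b <;> simp [boolSign]

@[simp] lemma abs_boolSign (b : Bool) : |boolSign b| = 1 := by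
  cases b <;> simp [boolSign]

variable {m : ℕ}

def flipAt (j : Fin m) : Equiv.Perm (Fin m → Bool) :=
  Function.Involutive.toPerm (fun ε => Function.update ε j (!ε j)) fun ε => by
    ext k; by_cases hk : k = j <;> simp [hk]

@[simp] lemma flipAt_apply (j : Fin m) (ε : Fin m → Bool) :
    flipAt j ε = Function.update ε j (!ε j) := rfl

lemma boolSign_flipAt_self (j : Fin m) (ε : Fin m → Bool) :
    boolSign (flipAt j ε j) = -boolSign (ε j) := by
  simp

lemma boolSign_flipAt_of_ne {j k : Fin m} (h : k ≠ j) (ε : Fin m → Bool) :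
    boolSign (flipAt j ε k) = boolSign (ε k) := by
  simp [h]

lemma sum_boolSign (j : Fin m) : ∑ ε : Fin m → Bool, boolSign (ε j) = 0 := by
  have h := Equiv.sum_comp (flipAt j) fun ε : Fin m → Bool => boolSign (ε j)
  simp only [boolSign_flipAt_self, Finset.sum_neg_distrib] at h
  linarith

lemma sum_boolSign_mul_boolSign (j k : Fin m) :
    ∑ ε : Fin m → Bool, boolSign (ε j) * boolSign (ε k) = if j = k then 2 ^ m else 0 := by
  split_ifs with hjk
  · simp [hjk]
  · have h := Equiv.sum_comp (flipAt j) fun ε : Fin m → Bool => boolSign (ε j) * boolSign (ε k)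
    simp only [boolSign_flipAt_self, boolSign_flipAt_of_ne (Ne.symm hjk), neg_mul,
      Finset.sum_neg_distrib] at h
    linarith

section Module

variable {E F : Type*} [AddCommGroup E] [Module ℝ E] [AddCommGroup F] [Module ℝ F]

def signedSum (ε : Fin m → Bool) (x0 : E) (y : Fin m → E) : E :=
  x0 + ∑ j, boolSign (ε j) • y j

lemma sum_sum_boolSign_mul (c : Fin m → ℝ) :
    ∑ ε : Fin m → Bool, ∑ k, boolSign (ε k) * c k = 0 := by
  rw [Finset.sum_comm]
  simp [← Finset.sum_mul, sum_boolSign]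

lemma sum_sum_sum_boolSign_mul_boolSign_mul (M : Fin m → Fin m → ℝ) :
    ∑ ε : Fin m → Bool, ∑ j, ∑ k, boolSign (ε j) * boolSign (ε k) * M j k
      = 2 ^ m * ∑ j, M j j := by
  simp_rw [Finset.sum_comm (s := Finset.univ (α := Fin m → Bool)) (t := Finset.univ (α := Fin m)),
    ← Finset.sum_mul, sum_boolSign_mul_boolSign]
  simp [Finset.mul_sum]

theorem sum_bilin_signedSum (B : E →ₗ[ℝ] F →ₗ[ℝ] ℝ) (a : E) (u : Fin m → E) (b : F)
    (v : Fin m → F) :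
    ∑ ε : Fin m → Bool, B (signedSum ε a u) (signedSum ε b v)
      = 2 ^ m * (B a b + ∑ j, B (u j) (v j)) := by
  have expand : ∀ ε : Fin m → Bool, B (signedSum ε a u) (signedSum ε b v)
      = B a b + ∑ j, boolSign (ε j) * B (u j) b + ∑ k, boolSign (ε k) * B a (v k)
        + ∑ j, ∑ k, boolSign (ε j) * boolSign (ε k) * B (u j) (v k) := by
    intro ε
    simp only [signedSum, map_add, map_sum, map_smul, LinearMap.add_apply, LinearMap.coe_sum,
      Finset.sum_apply, LinearMap.smul_apply, smul_eq_mul]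
    simp only [mul_add, Finset.mul_sum, Finset.sum_add_distrib]
    rw [Finset.sum_comm (f := fun k j => boolSign (ε k) * (boolSign (ε j) * B (u j) (v k))),
      ← add_assoc]
    congr 1
    exact Finset.sum_congr rfl fun j _ => Finset.sum_congr rfl fun k _ => by ring
  simp only [expand, Finset.sum_add_distrib, sum_sum_boolSign_mul,
    sum_sum_sum_boolSign_mul_boolSign_mul]
  simp [Finset.card_univ]
  ring

end Module

lemma sq_add_sum_le (a : ℝ) (b : Fin m → ℝ) :
    (a + ∑ j, b j) ^ 2 ≤ (m + 1) * (a ^ 2 + ∑ j, b j ^ 2) := by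
  simpa [Fin.sum_univ_succ] using
    sq_sum_le_card_mul_sum_sq (s := Finset.univ) (f := (Fin.cons a b : Fin (m + 1) → ℝ))

section Normed

variable {X : Type*} [NormedAddCommGroup X]

def sqNormSum (x0 : X) (y : Fin m → X) : ℝ := ‖x0‖ ^ 2 + ∑ j, ‖y j‖ ^ 2

lemma sqNormSum_nonneg (x0 : X) (y : Fin m → X) : 0 ≤ sqNormSum x0 y := by
  unfold sqNormSum; positivity

variable [NormedSpace ℝ X]

def njNum (x0 : X) (y : Fin m → X) : ℝ := ∑ ε : Fin m → Bool, ‖signedSum ε x0 y‖ ^ 2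

lemma njRatio_eq (x0 : X) (y : Fin m → X) :
    njRatio x0 y = njNum x0 y / (2 ^ m * sqNormSum x0 y) := rfl

lemma norm_signedSum_sq_le (ε : Fin m → Bool) (x0 : X) (y : Fin m → X) :
    ‖signedSum ε x0 y‖ ^ 2 ≤ (m + 1) * sqNormSum x0 y := by
  have htri : ‖signedSum ε x0 y‖ ≤ ‖x0‖ + ∑ j, ‖y j‖ :=
    (norm_add_le _ _).trans (by gcongr; exact (norm_sum_le _ _).trans (by simp [norm_smul]))
  calc ‖signedSum ε x0 y‖ ^ 2 ≤ (‖x0‖ + ∑ j, ‖y j‖) ^ 2 := by gcongr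
    _ ≤ (m + 1) * sqNormSum x0 y := sq_add_sum_le _ _

lemma njNum_le (x0 : X) (y : Fin m → X) : njNum x0 y ≤ 2 ^ m * (m + 1) * sqNormSum x0 y := by
  calc njNum x0 y ≤ ∑ _ε : Fin m → Bool, (m + 1) * sqNormSum x0 y :=
        Finset.sum_le_sum fun ε _ => norm_signedSum_sq_le ε x0 y
    _ = 2 ^ m * (m + 1) * sqNormSum x0 y := by simp [Finset.card_univ, mul_assoc]

lemma bddAbove_njRatio (n : ℕ) : BddAbove {c : ℝ | ∃ (x0 : X) (y : Fin (n - 1) → X),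
    0 < ‖x0‖ ^ 2 + ∑ j, ‖y j‖ ^ 2 ∧ c = njRatio x0 y} := by
  refine ⟨(n - 1 : ℕ) + 1, ?_⟩
  rintro _ ⟨x0, y, hpos, rfl⟩
  rw [njRatio_eq, div_le_iff₀ (by unfold sqNormSum; positivity)]
  linarith [njNum_le x0 y]

lemma njRatio_le_upperNJ {n : ℕ} (x0 : X) (y : Fin (n - 1) → X) (h : 0 < sqNormSum x0 y) :
    njRatio x0 y ≤ upperNJ X n :=
  le_csSup (bddAbove_njRatio n) ⟨x0, y, h, rfl⟩

lemma one_le_upperNJ [Nontrivial X] (n : ℕ) : 1 ≤ upperNJ X n := by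
  obtain ⟨x, hx⟩ := exists_ne (0 : X)
  have hx2 : 0 < ‖x‖ ^ 2 := by positivity
  convert njRatio_le_upperNJ (n := n) x 0 (by simpa [sqNormSum] using hx2)
  simp [njRatio_eq, njNum, sqNormSum, signedSum, Finset.card_univ, hx2.ne']

lemma njNum_le_upperNJ {n : ℕ} (x0 : X) (y : Fin (n - 1) → X) :
    njNum x0 y ≤ 2 ^ (n - 1) * upperNJ X n * sqNormSum x0 y := by
  rcases (sqNormSum_nonneg x0 y).eq_or_lt with h | h
  · simpa [← h] using njNum_le x0 y
  · have := njRatio_le_upperNJ x0 y h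
    rw [njRatio_eq, div_le_iff₀ (by positivity)] at this
    linarith

lemma exists_norm_le_and_mul_sq_le_apply (f : StrongDual ℝ X) {r : ℝ} (hr : r < 1) :
    ∃ x : X, ‖x‖ ≤ ‖f‖ ∧ r * ‖f‖ ^ 2 ≤ f x := by
  rcases (norm_nonneg f).eq_or_lt with hf | hf
  · exact ⟨0, by simp [← hf], by simp [← hf]⟩
  obtain ⟨u, hu, hfu⟩ := f.exists_lt_apply_of_lt_opNorm (mul_lt_of_lt_one_left hf hr)
  obtain ⟨v, hv, hfv⟩ : ∃ v : X, ‖v‖ ≤ 1 ∧ r * ‖f‖ ≤ f v := by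
    rcases lt_abs.1 hfu with h | h
    exacts [⟨u, hu.le, h.le⟩, ⟨-u, by simpa using hu.le, by simpa using h.le⟩]
  refine ⟨‖f‖ • v, ?_, ?_⟩
  · rw [norm_smul, norm_norm]
    exact mul_le_of_le_one_right hf.le hv
  · rw [map_smul, smul_eq_mul]
    nlinarith

lemma sq_sum_apply_signedSum_le (f0 : StrongDual ℝ X) (g : Fin m → StrongDual ℝ X) (x0 : X)
    (y : Fin m → X) :
    (∑ ε : Fin m → Bool, signedSum ε f0 g (signedSum ε x0 y)) ^ 2 ≤ njNum f0 g * njNum x0 y := by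
  calc (∑ ε : Fin m → Bool, signedSum ε f0 g (signedSum ε x0 y)) ^ 2
      ≤ (∑ ε : Fin m → Bool, ‖signedSum ε f0 g‖ * ‖signedSum ε x0 y‖) ^ 2 := by
        rw [← sq_abs]
        gcongr
        exact (Finset.abs_sum_le_sum_abs _ _).trans
          (Finset.sum_le_sum fun ε _ => (signedSum ε f0 g).le_opNorm _)
    _ ≤ njNum f0 g * njNum x0 y := Finset.sum_mul_sq_le_sq_mul_sq _ _ _

lemma le_of_forall_mem_Ioo_sq_mul_le {a b : ℝ} (h : ∀ r ∈ Set.Ioo (0 : ℝ) 1, r ^ 2 * a ≤ b) :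
    a ≤ b := by
  have hlim : Filter.Tendsto (fun r : ℝ => r ^ 2 * a) (nhdsWithin 1 (Set.Iio 1)) (nhds a) := by
    refine (Continuous.tendsto' ?_ 1 a (by simp)).mono_left nhdsWithin_le_nhds
    fun_prop
  exact le_of_tendsto hlim (Filter.eventually_of_mem (Ioo_mem_nhdsLT zero_lt_one) h)

theorem two_pow_mul_sqNormSum_le_mul_njNum {C : ℝ} (hC0 : 0 ≤ C)
    (hC : ∀ (x0 : X) (y : Fin m → X), njNum x0 y ≤ 2 ^ m * C * sqNormSum x0 y)
    (f0 : StrongDual ℝ X) (g : Fin m → StrongDual ℝ X) (hD : 0 < sqNormSum f0 g) :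
    2 ^ m * sqNormSum f0 g ≤ njNum f0 g * C := by
  refine le_of_forall_mem_Ioo_sq_mul_le fun r ⟨hr0, hr1⟩ => ?_
  obtain ⟨x0, hx0, hfx0⟩ := exists_norm_le_and_mul_sq_le_apply f0 hr1
  choose y hy hgy using fun j => exists_norm_le_and_mul_sq_le_apply (g j) hr1
  have hpair : r * (2 ^ m * sqNormSum f0 g)
      ≤ ∑ ε : Fin m → Bool, signedSum ε f0 g (signedSum ε x0 y) := by
    have hsum := sum_bilin_signedSum (ContinuousLinearMap.coeLM ℝ) f0 g x0 y
    simp only [ContinuousLinearMap.coeLM_apply, ContinuousLinearMap.coe_coe] at hsum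
    rw [hsum, mul_left_comm]
    gcongr
    rw [sqNormSum, mul_add, Finset.mul_sum]
    gcongr with j
    exact hgy j
  have hxy : sqNormSum x0 y ≤ sqNormSum f0 g := by
    unfold sqNormSum
    gcongr with j
    exact hy j
  have key : (r * (2 ^ m * sqNormSum f0 g)) ^ 2 ≤ njNum f0 g * (2 ^ m * C * sqNormSum f0 g) :=
    calc (r * (2 ^ m * sqNormSum f0 g)) ^ 2
        ≤ (∑ ε : Fin m → Bool, signedSum ε f0 g (signedSum ε x0 y)) ^ 2 := by gcongr
      _ ≤ njNum f0 g * njNum x0 y := sq_sum_apply_signedSum_le f0 g x0 y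
      _ ≤ njNum f0 g * (2 ^ m * C * sqNormSum f0 g) := by
        gcongr
        · exact Finset.sum_nonneg fun ε _ => sq_nonneg _
        · exact (hC x0 y).trans (by gcongr)
  refine le_of_mul_le_mul_right ?_ (by positivity : (0 : ℝ) < 2 ^ m * sqNormSum f0 g)
  calc r ^ 2 * (2 ^ m * sqNormSum f0 g) * (2 ^ m * sqNormSum f0 g)
      = (r * (2 ^ m * sqNormSum f0 g)) ^ 2 := by ring
    _ ≤ njNum f0 g * (2 ^ m * C * sqNormSum f0 g) := key
    _ = njNum f0 g * C * (2 ^ m * sqNormSum f0 g) := by ring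

end Normed

end NeumannJordan

open NeumannJordan in
theorem stmt_7_general (X : Type*) [NormedAddCommGroup X] [NormedSpace ℝ X]
    [Nontrivial X] (n : ℕ) :
    lowerNJ (StrongDual ℝ X) n ≥ 1 / upperNJ X n := by
  have hC := one_le_upperNJ (X := X) n
  obtain ⟨x, hx⟩ := exists_ne (0 : X)
  obtain ⟨f, hf⟩ := SeparatingDual.exists_ne_zero (R := ℝ) hx
  have hf0 : f ≠ 0 := fun h => hf (by simp [h])
  refine le_csInf ⟨_, f, 0, by simpa using pow_pos (norm_pos_iff.2 hf0) 2, rfl⟩ ?_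
  rintro _ ⟨f0, g, hD, rfl⟩
  rw [njRatio_eq, div_le_div_iff₀ (zero_lt_one.trans_le hC) (by positivity), one_mul]
  exact two_pow_mul_sqNormSum_le_mul_njNum (zero_le_one.trans hC) njNum_le_upperNJ f0 g hD

theorem stmt_7 (X : Type*) [NormedAddCommGroup X] [NormedSpace ℝ X] [CompleteSpace X]
    [Nontrivial X] (n : ℕ) (hn : 2 ≤ n) :
    lowerNJ (StrongDual ℝ X) n ≥ 1 / upperNJ X n :=
  stmt_7_general X n
end

section
/- Let n ≥ 2 be an integer, 1 ≤ p ≤ 2 a real number, and k ≥ n an integer. Let ℓ_k^p denote ℝ^k equipped with the norm ‖(t_1,…,t_k)‖ = (∑_{i=1}^k |t_i|^p)^{1/p}. Then C̄_NJ^{(n)}(ℓ_k^p) = C̄_mNJ^{(n)}(ℓ_k^p) = n^{2/p − 1}. The same equalities hold for the infinite-dimensional sequence space ℓ^p of p-summable real sequences. -/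
open Finset MeasureTheory

/-!
Put `q = 2 / p ≥ 1`, so that `‖v‖² = (∑ᵢ |vᵢ|^p)^q` in `ℓ^p`. For each coordinate `i`, the
parallelogram law and `‖·‖₂ ≤ ‖·‖_p` on `ℝⁿ` bound the `ℓ^q`-norm of the vector `(|s_ε i|^p)_ε`
built from the signed sums `s_ε` by `2^((n-1)/q) ∑_j |x_j i|^p`. Minkowski's inequality in `ℓ^q`
over the `2^(n-1)` sign patterns, summed over `i`, then gives
`∑_ε ‖s_ε‖² ≤ 2^(n-1) (∑_j ‖x_j‖^p)^q`, and the power mean inequality bounds this by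
`2^(n-1) n^(q-1) ∑_j ‖x_j‖²`. Unit vectors with disjoint supports attain the bound, since all
their signed sums have norm `n^(1/p)`.
-/

section SignedSum

variable {E F : Type*} [AddCommGroup E] [Module ℝ E] [AddCommGroup F] [Module ℝ F] {m : ℕ}

def signedSum (x : E) (y : Fin m → E) (ε : Fin m → Bool) : E :=
  x + ∑ j, (if ε j then (1 : ℝ) else -1) • y j

theorem map_signedSum (f : E →ₗ[ℝ] F) (x : E) (y : Fin m → E) (ε : Fin m → Bool) :
    f (signedSum x y ε) = signedSum (f x) (f ∘ y) ε := by
  simp only [signedSum, map_add, map_sum, map_smul, Function.comp_apply]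

theorem signedSum_cons (x : E) (y : Fin (m + 1) → E) (b : Bool) (ε : Fin m → Bool) :
    signedSum x y (Fin.cons b ε) =
      signedSum (x + (if b then (1 : ℝ) else -1) • y 0) (Fin.tail y) ε := by
  simp only [signedSum, Fin.sum_univ_succ, Fin.cons_zero, Fin.cons_succ, Fin.tail, add_assoc]

end SignedSum

/-- Iterated parallelogram law. -/
theorem sum_norm_signedSum_sq {E : Type*} [NormedAddCommGroup E] [InnerProductSpace ℝ E]
    {m : ℕ} (x : E) (y : Fin m → E) :
    ∑ ε, ‖signedSum x y ε‖ ^ 2 = 2 ^ m * (‖x‖ ^ 2 + ∑ j, ‖y j‖ ^ 2) := by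
  induction m generalizing x with
  | zero => simp [signedSum]
  | succ m ih =>
    rw [← (Fin.consEquiv fun _ => Bool).sum_comp, Fintype.sum_prod_type, Fintype.sum_bool]
    simp only [Fin.consEquiv, Equiv.coe_fn_mk, signedSum_cons, ih, if_true, Bool.false_eq_true,
      if_false, one_smul, neg_one_smul, ← sub_eq_add_neg, Fin.sum_univ_succ, Fin.tail]
    linear_combination (2 : ℝ) ^ m * parallelogram_law_with_norm ℝ x (y 0)

theorem njRatio_map {X Y : Type*} [NormedAddCommGroup X] [NormedSpace ℝ X]
    [NormedAddCommGroup Y] [NormedSpace ℝ Y] (f : X →ₗᵢ[ℝ] Y) {m : ℕ} (x : X) (y : Fin m → X) :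
    njRatio (f x) (f ∘ y) = njRatio x y := by
  simp only [njRatio, Function.comp_apply, f.norm_map, ← f.map_smul, ← map_sum, ← map_add]

theorem upperNJ_eq_and_upperMNJ_eq {X : Type*} [NormedAddCommGroup X] [NormedSpace ℝ X]
    {m : ℕ} {C : ℝ} (hC : ∀ (x : X) (y : Fin m → X), njRatio x y ≤ C) (x : X) (y : Fin m → X)
    (hx : ‖x‖ = 1) (hy : ∀ j, ‖y j‖ = 1) (hxy : njRatio x y = C) :
    upperNJ X (m + 1) = C ∧ upperMNJ X (m + 1) = C := by
  have hpos : 0 < ‖x‖ ^ 2 + ∑ j, ‖y j‖ ^ 2 := by simp only [hx, hy]; positivity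
  constructor
  · refine IsGreatest.csSup_eq ⟨⟨x, y, hpos, hxy.symm⟩, ?_⟩
    rintro _ ⟨x, y, -, rfl⟩
    exact hC x y
  · refine IsGreatest.csSup_eq ⟨⟨x, y, hx, hy, hxy.symm⟩, ?_⟩
    rintro _ ⟨x, y, -, -, rfl⟩
    exact hC x y

theorem Real.rpow_rpow_two_div {a p : ℝ} (ha : 0 ≤ a) (hp : 0 < p) :
    (a ^ p) ^ (2 / p) = a ^ 2 := by
  rw [← Real.rpow_mul ha, mul_div_cancel₀ _ hp.ne', Real.rpow_two]

theorem Real.sum_rpow_le_rpow_sum {ι : Type*} (s : Finset ι) {f : ι → ℝ} (hf : ∀ i ∈ s, 0 ≤ f i)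
    {q : ℝ} (hq : 1 ≤ q) : ∑ i ∈ s, f i ^ q ≤ (∑ i ∈ s, f i) ^ q := by
  have hS : 0 ≤ ∑ i ∈ s, f i := Finset.sum_nonneg hf
  calc ∑ i ∈ s, f i ^ q = ∑ i ∈ s, f i ^ (q - 1) * f i := by
        refine Finset.sum_congr rfl fun i hi => ?_
        rw [← Real.rpow_add_one' (hf i hi) (by linarith), sub_add_cancel]
    _ ≤ ∑ i ∈ s, (∑ i ∈ s, f i) ^ (q - 1) * f i := by
        refine Finset.sum_le_sum fun i hi => mul_le_mul_of_nonneg_right ?_ (hf i hi)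
        exact Real.rpow_le_rpow (hf i hi) (Finset.single_le_sum hf hi) (by linarith)
    _ = (∑ i ∈ s, f i) ^ q := by
        rw [← Finset.mul_sum, ← Real.rpow_add_one' hS (by linarith), sub_add_cancel]

/-- Minkowski's inequality for a countable family of vectors in `ℓ^q` of a finite set. -/
theorem Real.sum_rpow_tsum_le {ι α : Type*} [Fintype α] {q : ℝ} (hq : 1 ≤ q) {f : ι → α → ℝ}
    (hf : ∀ i a, 0 ≤ f i a) {g : ι → ℝ} (hg : Summable g) (hg₀ : ∀ i, 0 ≤ g i)
    (hfg : ∀ i, ∑ a, f i a ^ q ≤ g i ^ q) :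
    ∑ a, (∑' i, f i a) ^ q ≤ (∑' i, g i) ^ q := by
  have hq₀ : 0 < q := by linarith
  have : Fact (1 ≤ ENNReal.ofReal q) := ⟨by simpa using hq⟩
  have hQ : (ENNReal.ofReal q).toReal = q := ENNReal.toReal_ofReal hq₀.le
  have hnorm : ∀ v : α → ℝ, (∀ a, 0 ≤ v a) →
      ‖WithLp.toLp (ENNReal.ofReal q) v‖ ^ q = ∑ a, v a ^ q := by
    intro v hv
    rw [PiLp.norm_eq_sum (by rw [hQ]; exact hq₀), hQ,
      ← Real.rpow_mul (by positivity), one_div_mul_cancel hq₀.ne', Real.rpow_one]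
    simp only [Real.norm_eq_abs, abs_of_nonneg (hv _)]
  have hbound : ∀ i, ‖WithLp.toLp (ENNReal.ofReal q) (f i)‖ ≤ g i := fun i =>
    (Real.rpow_le_rpow_iff (norm_nonneg _) (hg₀ i) hq₀).1 (hnorm _ (hf i) ▸ hfg i)
  have hsum : Summable fun i => WithLp.toLp (ENNReal.ofReal q) (f i) :=
    Summable.of_norm_bounded hg hbound
  have htsum : ∑' i, WithLp.toLp (ENNReal.ofReal q) (f i) =
      WithLp.toLp (ENNReal.ofReal q) (fun a => ∑' i, f i a) := by
    ext a
    exact (PiLp.proj (𝕜 := ℝ) (ENNReal.ofReal q) (fun _ : α => ℝ) a).map_tsum hsum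
  rw [← hnorm _ fun a => tsum_nonneg fun i => hf i a, ← htsum]
  exact Real.rpow_le_rpow (norm_nonneg _) (tsum_of_norm_bounded hg.hasSum hbound) hq₀.le

theorem one_le_of_fact_one_le_ofReal (p : ℝ) [Fact (1 ≤ ENNReal.ofReal p)] : 1 ≤ p :=
  ENNReal.one_le_ofReal.1 Fact.out

namespace lp

variable {ι : Type*} {p : ℝ} [Fact (1 ≤ ENNReal.ofReal p)]

theorem norm_rpow_eq_tsum_ofReal (v : lp (fun _ : ι => ℝ) (ENNReal.ofReal p)) :
    ‖v‖ ^ p = ∑' i, ‖v i‖ ^ p := by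
  have hp : 0 < p := zero_lt_one.trans_le (one_le_of_fact_one_le_ofReal p)
  have hP : (ENNReal.ofReal p).toReal = p := ENNReal.toReal_ofReal hp.le
  simpa only [hP] using norm_rpow_eq_tsum (by rw [hP]; exact hp) v

theorem summable_norm_rpow (v : lp (fun _ : ι => ℝ) (ENNReal.ofReal p)) :
    Summable fun i => ‖v i‖ ^ p := by
  have hp : 0 < p := zero_lt_one.trans_le (one_le_of_fact_one_le_ofReal p)
  have hP : (ENNReal.ofReal p).toReal = p := ENNReal.toReal_ofReal hp.le
  simpa only [hP] using (lp.memℓp v).summable (by rw [hP]; exact hp)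

theorem sum_norm_signedSum_sq_le (hp₂ : p ≤ 2) {m : ℕ}
    (x : lp (fun _ : ι => ℝ) (ENNReal.ofReal p))
    (y : Fin m → lp (fun _ : ι => ℝ) (ENNReal.ofReal p)) :
    ∑ ε, ‖signedSum x y ε‖ ^ 2 ≤ 2 ^ m * (m + 1) ^ (2 / p - 1) * (‖x‖ ^ 2 + ∑ j, ‖y j‖ ^ 2) := by
  have hp := one_le_of_fact_one_le_ofReal p
  have hp₀ : 0 < p := by linarith
  have hq : 1 ≤ 2 / p := by rw [le_div_iff₀ hp₀]; linarith
  have hsq : ∀ a : ℝ, 0 ≤ a → (a ^ p) ^ (2 / p) = a ^ 2 := fun _ ha =>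
    Real.rpow_rpow_two_div ha hp₀
  set z : Fin (m + 1) → lp (fun _ : ι => ℝ) (ENNReal.ofReal p) := Fin.cons x y
  set u : ι → ℝ := fun i => ‖x i‖ ^ p + ∑ j, ‖y j i‖ ^ p
  have hy : ∀ s : Finset (Fin m), Summable fun i => ∑ j ∈ s, ‖y j i‖ ^ p := fun s =>
    summable_sum fun j _ => summable_norm_rpow (y j)
  have hu : Summable u := (summable_norm_rpow x).add (hy univ)
  have hpoint : ∀ i, ∑ ε, (‖signedSum x y ε i‖ ^ p) ^ (2 / p) ≤
      (2 ^ (m / (2 / p)) * u i) ^ (2 / p) := by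
    intro i
    have hcoord : ∀ ε, signedSum x y ε i = signedSum (x i) (fun j => y j i) ε :=
      map_signedSum (lp.evalₗ (𝕜 := ℝ) _ _ i) x y
    calc ∑ ε, (‖signedSum x y ε i‖ ^ p) ^ (2 / p)
          = 2 ^ m * (‖x i‖ ^ 2 + ∑ j, ‖y j i‖ ^ 2) := by
          simp only [hsq _ (norm_nonneg _), hcoord, sum_norm_signedSum_sq]
      _ ≤ 2 ^ m * u i ^ (2 / p) := by
          gcongr
          have := Real.sum_rpow_le_rpow_sum univ
            (f := fun t => ‖z t i‖ ^ p)
            (fun _ _ => by positivity) hq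
          simpa only [z, Fin.sum_univ_succ, Fin.cons_zero, Fin.cons_succ, hsq _ (norm_nonneg _)]
            using this
      _ = (2 ^ (m / (2 / p)) * u i) ^ (2 / p) := by
          rw [Real.mul_rpow (by positivity) (by positivity), ← Real.rpow_mul (by norm_num),
            div_mul_cancel₀ _ (by positivity), Real.rpow_natCast]
  calc ∑ ε, ‖signedSum x y ε‖ ^ 2 = ∑ ε, (∑' i, ‖signedSum x y ε i‖ ^ p) ^ (2 / p) := by
        simp only [← norm_rpow_eq_tsum_ofReal, hsq _ (norm_nonneg _)]
    _ ≤ (∑' i, 2 ^ (m / (2 / p)) * u i) ^ (2 / p) :=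
        Real.sum_rpow_tsum_le hq (fun _ _ => by positivity) (hu.mul_left _)
          (fun _ => by positivity) hpoint
    _ = 2 ^ m * (‖x‖ ^ p + ∑ j, ‖y j‖ ^ p) ^ (2 / p) := by
        rw [tsum_mul_left, Real.mul_rpow (by positivity) (tsum_nonneg fun _ => by positivity),
          ← Real.rpow_mul (by norm_num), div_mul_cancel₀ _ (by positivity), Real.rpow_natCast,
          Summable.tsum_add (summable_norm_rpow x) (hy univ),
          Summable.tsum_finsetSum fun j _ => summable_norm_rpow (y j)]
        simp only [norm_rpow_eq_tsum_ofReal]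
    _ ≤ 2 ^ m * ((m + 1) ^ (2 / p - 1) * (‖x‖ ^ 2 + ∑ j, ‖y j‖ ^ 2)) := by
        gcongr
        have := Real.rpow_sum_le_const_mul_sum_rpow_of_nonneg univ hq
          (f := fun t => ‖z t‖ ^ p)
          (fun _ _ => by positivity)
        simpa only [z, Fin.sum_univ_succ, Fin.cons_zero, Fin.cons_succ, hsq _ (norm_nonneg _),
          card_univ, Fintype.card_fin, Nat.cast_add, Nat.cast_one] using this
    _ = _ := by ring

theorem njRatio_le (hp₂ : p ≤ 2) {m : ℕ} (x : lp (fun _ : ι => ℝ) (ENNReal.ofReal p))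
    (y : Fin m → lp (fun _ : ι => ℝ) (ENNReal.ofReal p)) :
    njRatio x y ≤ (m + 1) ^ (2 / p - 1) := by
  refine div_le_of_le_mul₀ (by positivity) (by positivity) ?_
  have := sum_norm_signedSum_sq_le hp₂ x y
  unfold signedSum at this
  linarith

variable [DecidableEq ι]

theorem norm_rpow_sum_single_embedding {N : ℕ} (e : Fin N ↪ ι) (c : Fin N → ℝ)
    (hc : ∀ t, ‖c t‖ = 1) :
    ‖∑ t, lp.single (E := fun _ : ι => ℝ) (ENNReal.ofReal p) (e t) (c t)‖ ^ p = N := by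
  have hp : 0 < p := zero_lt_one.trans_le (one_le_of_fact_one_le_ofReal p)
  have hP : (ENNReal.ofReal p).toReal = p := ENNReal.toReal_ofReal hp.le
  have hext : ∀ t, Function.extend e c 0 (e t) = c t := e.injective.extend_apply c 0
  calc ‖∑ t, lp.single (E := fun _ : ι => ℝ) (ENNReal.ofReal p) (e t) (c t)‖ ^ p
      = ‖∑ i ∈ univ.map e, lp.single (ENNReal.ofReal p) i (Function.extend e c 0 i)‖ ^ p := by
        rw [Finset.sum_map]
        simp only [hext]
    _ = ∑ i ∈ univ.map e, ‖Function.extend e c 0 i‖ ^ p := by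
        have h := lp.norm_sum_single (E := fun _ : ι => ℝ) (p := ENNReal.ofReal p)
          (by rw [hP]; exact hp) (Function.extend e c 0) (univ.map e)
        rw [hP] at h
        exact h
    _ = N := by simp only [Finset.sum_map, hext, hc, Real.one_rpow, sum_const, card_univ,
      Fintype.card_fin, nsmul_eq_mul, mul_one]

theorem njRatio_single_embedding {m : ℕ} (e : Fin (m + 1) ↪ ι) :
    njRatio (lp.single (E := fun _ : ι => ℝ) (ENNReal.ofReal p) (e 0) 1)
      (fun j => lp.single (ENNReal.ofReal p) (e j.succ) 1) = (m + 1) ^ (2 / p - 1) := by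
  have hp : 0 < p := zero_lt_one.trans_le (one_le_of_fact_one_le_ofReal p)
  set x := lp.single (E := fun _ : ι => ℝ) (ENNReal.ofReal p) (e 0) 1
  set y : Fin m → lp (fun _ : ι => ℝ) (ENNReal.ofReal p) :=
    fun j => lp.single (ENNReal.ofReal p) (e j.succ) 1
  have hsigned : ∀ ε, signedSum x y ε = ∑ t, lp.single (ENNReal.ofReal p) (e t)
      ((Fin.cons 1 fun j => if ε j then 1 else -1 : Fin (m + 1) → ℝ) t) := by
    intro ε
    simp only [x, y, signedSum, Fin.sum_univ_succ, Fin.cons_zero, Fin.cons_succ,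
      ← lp.single_smul, smul_eq_mul, mul_one]
  have hnorm : ∀ ε, ‖signedSum x y ε‖ ^ 2 = (m + 1) ^ (2 / p) := by
    intro ε
    rw [hsigned, ← Real.rpow_rpow_two_div (norm_nonneg _) hp, norm_rpow_sum_single_embedding]
    · push_cast; ring_nf
    · refine Fin.cases (by simp) fun j => ?_
      by_cases h : ε j <;> simp [h]
  change (∑ ε, ‖signedSum _ _ ε‖ ^ 2) / _ = _
  simp only [hnorm, x, y, lp.norm_single (ENNReal.ofReal_pos.2 hp), norm_one, sum_const, card_univ,
    Fintype.card_fun, Fintype.card_bool, Fintype.card_fin, nsmul_eq_mul]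
  rw [Real.rpow_sub (by positivity), Real.rpow_one]
  push_cast
  field_simp
  ring

end lp

theorem upperNJ_eq_and_upperMNJ_eq_of_linearIsometryEquiv_lp {X ι : Type*}
    [NormedAddCommGroup X] [NormedSpace ℝ X] [DecidableEq ι] {p : ℝ}
    [Fact (1 ≤ ENNReal.ofReal p)] (hp₂ : p ≤ 2)
    (T : X ≃ₗᵢ[ℝ] lp (fun _ : ι => ℝ) (ENNReal.ofReal p)) {m : ℕ} (e : Fin (m + 1) ↪ ι) :
    upperNJ X (m + 1) = (m + 1) ^ (2 / p - 1) ∧ upperMNJ X (m + 1) = (m + 1) ^ (2 / p - 1) := by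
  have hp : 0 < ENNReal.ofReal p := zero_lt_one.trans_le Fact.out
  refine upperNJ_eq_and_upperMNJ_eq (fun x y => ?_)
    (T.symm (lp.single (ENNReal.ofReal p) (e 0) 1))
    (fun j => T.symm (lp.single (ENNReal.ofReal p) (e j.succ) 1))
    (by simp [lp.norm_single hp]) (fun j => by simp [lp.norm_single hp]) ?_
  · rw [← njRatio_map T.toLinearIsometry]
    exact lp.njRatio_le hp₂ _ _
  · rw [← njRatio_map T.toLinearIsometry]
    simpa [Function.comp_def] using lp.njRatio_single_embedding e

theorem stmt_9_general (n : ℕ) (hn : 2 ≤ n) (p : ℝ) (hp2 : p ≤ 2)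
    [Fact (1 ≤ ENNReal.ofReal p)] (k : ℕ) (hk : n ≤ k) :
    upperNJ (PiLp (ENNReal.ofReal p) (fun (_ : Fin k) => ℝ)) n = (n : ℝ) ^ (2 / p - 1) ∧
    upperMNJ (PiLp (ENNReal.ofReal p) (fun (_ : Fin k) => ℝ)) n = (n : ℝ) ^ (2 / p - 1) ∧
    upperNJ (lp (fun (_ : ℕ) => ℝ) (ENNReal.ofReal p)) n = (n : ℝ) ^ (2 / p - 1) ∧
    upperMNJ (lp (fun (_ : ℕ) => ℝ) (ENNReal.ofReal p)) n = (n : ℝ) ^ (2 / p - 1) := by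
  obtain ⟨m, rfl⟩ : ∃ m, n = m + 1 := ⟨n - 1, by omega⟩
  push_cast
  obtain ⟨hNJ, hMNJ⟩ := upperNJ_eq_and_upperMNJ_eq_of_linearIsometryEquiv_lp hp2
    (lpPiLpₗᵢ _ ℝ).symm (Fin.castLEEmb hk)
  obtain ⟨hNJ', hMNJ'⟩ := upperNJ_eq_and_upperMNJ_eq_of_linearIsometryEquiv_lp hp2
    (LinearIsometryEquiv.refl ℝ _) Fin.valEmbedding
  exact ⟨hNJ, hMNJ, hNJ', hMNJ'⟩

theorem stmt_9 (n : ℕ) (hn : 2 ≤ n) (p : ℝ) (hp1 : 1 ≤ p) (hp2 : p ≤ 2)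
    [Fact (1 ≤ ENNReal.ofReal p)] (k : ℕ) (hk : n ≤ k) :
    upperNJ (PiLp (ENNReal.ofReal p) (fun (_ : Fin k) => ℝ)) n = (n : ℝ) ^ (2 / p - 1) ∧
    upperMNJ (PiLp (ENNReal.ofReal p) (fun (_ : Fin k) => ℝ)) n = (n : ℝ) ^ (2 / p - 1) ∧
    upperNJ (lp (fun (_ : ℕ) => ℝ) (ENNReal.ofReal p)) n = (n : ℝ) ^ (2 / p - 1) ∧
    upperMNJ (lp (fun (_ : ℕ) => ℝ) (ENNReal.ofReal p)) n = (n : ℝ) ^ (2 / p - 1) :=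
  stmt_9_general n hn p hp2 k hk
end
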